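/- arXiv:1212.6540 — 4 statements merged into one kernel-verified Lean document; each statement's English description precedes it below -/
import Mathlib

section
/- Let g̃ ∈ GL₂(K) be the matrix [[εc, d],[εa, εb]] where a, d ∈ O* and b, c ∈ O. Then the characteristic polynomial of g̃, namely λ² − ε(b+c)λ + (ε²bc − εad), has no root in K; consequently this polynomial is irreducible over K and g̃ is not conjugate in GL₂(K) to any upper triangular matrix. -/
noncomputable section

open Polynomial

/-- The valuation `v` on `K = k((ε))`, with `v 0 = ∞`. -/
def lv {k : Type*} [Field k] (x : LaurentSeries k) : WithTop ℤ := x.orderTop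

/-- The uniformizer `ε` of `k((ε))`. -/
def eps (k : Type*) [Field k] : LaurentSeries k := HahnSeries.single (1 : ℤ) 1

theorem statement0 (k : Type*) [Field k] [IsAlgClosed k]
    (a b c d : LaurentSeries k)
    (ha : lv a = 0) (hd : lv d = 0) (hb : 0 ≤ lv b) (hc : 0 ≤ lv c) :
    (∀ lam : LaurentSeries k,
      lam ^ 2 - eps k * (b + c) * lam + (eps k ^ 2 * (b * c) - eps k * (a * d)) ≠ 0) ∧
    Irreducible (X ^ 2 - C (eps k * (b + c)) * X
      + C (eps k ^ 2 * (b * c) - eps k * (a * d)) : Polynomial (LaurentSeries k)) ∧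
    (∀ h : GL (Fin 2) (LaurentSeries k),
      ((h⁻¹).val * !![eps k * c, d; eps k * a, eps k * b] * h.val) 1 0 ≠ 0) := by
  set V := HahnSeries.addVal ℤ k with hVdef
  have hVl : ∀ x : LaurentSeries k, V x = lv x := fun x => HahnSeries.addVal_apply
  have he : V (eps k) = ((1 : ℤ) : WithTop ℤ) := by
    rw [hVl]; exact HahnSeries.orderTop_single one_ne_zero
  have hVa : V a = 0 := by rw [hVl, ha]
  have hVd : V d = 0 := by rw [hVl, hd]
  have hVb : 0 ≤ V b := by rw [hVl]; exact hb
  have hVc : 0 ≤ V c := by rw [hVl]; exact hc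
  have hVbc : (0 : WithTop ℤ) ≤ V (b + c) :=
    le_trans (le_min hVb hVc) (V.map_add b c)
  have hVad : V (eps k * (a * d)) = ((1 : ℤ) : WithTop ℤ) := by
    rw [V.map_mul, V.map_mul, hVa, hVd, he]; simp
  have hVe2 : ((2 : ℤ) : WithTop ℤ) ≤ V (eps k ^ 2 * (b * c)) := by
    rw [pow_two, V.map_mul, V.map_mul, V.map_mul, he]
    calc ((2 : ℤ) : WithTop ℤ) = ((1:ℤ) : WithTop ℤ) + ((1:ℤ) : WithTop ℤ) + 0 + 0 := by
          norm_num
      _ ≤ ((1:ℤ) : WithTop ℤ) + ((1:ℤ) : WithTop ℤ) + V b + V c := by gcongr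
      _ = _ := by rw [add_assoc]
  have hVR : V (eps k ^ 2 * (b * c) - eps k * (a * d)) = ((1 : ℤ) : WithTop ℤ) := by
    rw [V.map_sub_eq_of_lt_right, hVad]
    rw [hVad]
    exact lt_of_lt_of_le (by exact_mod_cast (by norm_num : (1:ℤ) < 2)) hVe2
  have key : ∀ lam : LaurentSeries k,
      lam ^ 2 - eps k * (b + c) * lam + (eps k ^ 2 * (b * c) - eps k * (a * d)) ≠ 0 := by
    intro lam h0
    by_cases hlam : lam = 0
    · subst hlam
      have hz : eps k ^ 2 * (b * c) - eps k * (a * d) = 0 := by linear_combination h0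
      rw [hz] at hVR
      simp at hVR
    · obtain ⟨n, hn⟩ := WithTop.ne_top_iff_exists.mp (V.ne_top_iff.mpr hlam)
      have hEq : lam ^ 2 = eps k * (b + c) * lam -
          (eps k ^ 2 * (b * c) - eps k * (a * d)) := by linear_combination h0
      have hVsq : V (lam ^ 2) = ((n + n : ℤ) : WithTop ℤ) := by
        rw [pow_two, V.map_mul, ← hn]; exact_mod_cast rfl
      have hVQ : ((n + 1 : ℤ) : WithTop ℤ) ≤ V (eps k * (b + c) * lam) := by
        rw [V.map_mul, V.map_mul, he, ← hn]
        calc ((n + 1 : ℤ) : WithTop ℤ) = ((1:ℤ) : WithTop ℤ) + 0 + ((n:ℤ) : WithTop ℤ) := by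
              push_cast; rw [add_zero, add_comm]
          _ ≤ ((1:ℤ) : WithTop ℤ) + V (b + c) + ((n:ℤ) : WithTop ℤ) := by gcongr
      rcases le_or_gt 1 n with hn1 | hn1
      · -- n ≥ 1 : V (Q - R) = V R = 1, but V (lam^2) = 2n ≥ 2
        have hlt : V (eps k ^ 2 * (b * c) - eps k * (a * d)) <
            V (eps k * (b + c) * lam) := by
          rw [hVR]
          exact lt_of_lt_of_le (by exact_mod_cast (by omega : (1:ℤ) < n + 1)) hVQ
        have := V.map_sub_eq_of_lt_right hlt
        rw [← hEq, hVsq, hVR] at this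
        have : (n + n : ℤ) = 1 := by exact_mod_cast this
        omega
      · -- n ≤ 0 : V (Q - R) ≥ min(n+1, 1) > 2n = V (lam^2)
        have hmin : ((min (n + 1) 1 : ℤ) : WithTop ℤ) ≤
            V (eps k * (b + c) * lam - (eps k ^ 2 * (b * c) - eps k * (a * d))) := by
          refine le_trans ?_ (V.map_sub _ _)
          refine le_min (le_trans ?_ hVQ) ?_
          · exact_mod_cast min_le_left _ _
          · rw [hVR]; exact_mod_cast min_le_right _ _
        rw [← hEq, hVsq] at hmin
        have : (min (n + 1) 1 : ℤ) ≤ n + n := by exact_mod_cast hmin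
        omega
  refine ⟨key, ?_, ?_⟩
  · -- irreducibility
    set u := eps k * (b + c)
    set w := eps k ^ 2 * (b * c) - eps k * (a * d)
    set p : Polynomial (LaurentSeries k) := X ^ 2 - C u * X + C w with hp
    have hdeg : p.natDegree = 2 := by
      rw [hp]; compute_degree!
    have hp0 : p ≠ 0 := fun h => by simp [h] at hdeg
    rw [irreducible_iff_roots_eq_zero_of_degree_le_three (by omega) (by omega)]
    rw [Multiset.eq_zero_iff_forall_notMem]
    intro r hr
    rw [mem_roots hp0] at hr
    have hev : r ^ 2 - u * r + w = 0 := by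
      have := hr
      simp only [IsRoot, hp, eval_add, eval_sub, eval_mul, eval_pow, eval_C, eval_X] at this
      exact this
    exact key r hev
  · -- no triangularization
    intro h hM
    set g : Matrix (Fin 2) (Fin 2) (LaurentSeries k) :=
      !![eps k * c, d; eps k * a, eps k * b] with hg
    set M : Matrix (Fin 2) (Fin 2) (LaurentSeries k) := (h⁻¹).val * g * h.val with hMdef
    have hone : h.val * (h⁻¹).val = 1 := by
      rw [← Units.val_mul, mul_inv_cancel, Units.val_one]
    have hone' : (h⁻¹).val * h.val = 1 := by
      rw [← Units.val_mul, inv_mul_cancel, Units.val_one]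
    have htr : M.trace = g.trace := by
      rw [hMdef, Matrix.trace_mul_comm, ← mul_assoc, hone, one_mul]
    have hdet : M.det = g.det := by
      rw [hMdef, Matrix.det_mul, Matrix.det_mul, mul_comm, ← mul_assoc, ← Matrix.det_mul,
        hone, Matrix.det_one, one_mul]
    have htr2 : M 0 0 + M 1 1 = eps k * c + eps k * b := by
      rw [← Matrix.trace_fin_two, htr, hg, Matrix.trace_fin_two_of]
    have hdet2 : M 0 0 * M 1 1 - M 0 1 * M 1 0 = eps k * c * (eps k * b) - d * (eps k * a) := by
      rw [← Matrix.det_fin_two, hdet, hg, Matrix.det_fin_two_of]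
    exact key (M 0 0) (by linear_combination (M 0 0) * htr2 - hdet2 - (M 0 1) * hM)
end
end

section
/- Let g̃ = [[εc, d],[εa, εb]] with a, d ∈ O* and b, c ∈ O, and let h ∈ GL₂(K) be such that h·g̃ = g̃·h and v(det h) is even. Then h ∈ I¹. -/
noncomputable section

/-- The set `I¹` of matrices `[[a,b],[c,d]]` with `v a = v d = m`, `v b ≥ m`, `v c > m`
for some `m ∈ ℤ`. -/
def I1 (k : Type*) [Field k] : Set (Matrix (Fin 2) (Fin 2) (LaurentSeries k)) :=
  {g | ∃ m : ℤ, lv (g 0 0) = (m : WithTop ℤ) ∧ lv (g 1 1) = (m : WithTop ℤ) ∧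
    (m : WithTop ℤ) ≤ lv (g 0 1) ∧ (m : WithTop ℤ) < lv (g 1 0)}

/-!
The lower-left entry of `g̃` is nonzero, so its centralizer is `K[g̃]` and `h = x + y g̃`.
Then `det h = x² + x y tr g̃ + y² det g̃` with `v (tr g̃) ≥ 1` and `v (det g̃) = 1`. If `v y < v x`
the last term dominates and `v (det h) = 2 v(y) + 1` is odd. Hence `v x ≤ v y`, and as every
entry of `g̃` except `d` is divisible by `ε`, the entries of `x + y g̃` have the valuations
demanded by `I¹`, with `m = v x`.
-/

open Matrix

theorem Matrix.exists_eq_smul_one_add_smul_of_commute {F : Type*} [Field F]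
    {M N : Matrix (Fin 2) (Fin 2) F} (hM : M 1 0 ≠ 0) (hNM : Commute N M) :
    ∃ x y : F, N = x • 1 + y • M := by
  have e00 := congrFun (congrFun hNM 0) 0
  have e10 := congrFun (congrFun hNM 1) 0
  simp only [mul_apply, Fin.sum_univ_two] at e00 e10
  refine ⟨N 0 0 - N 1 0 / M 1 0 * M 0 0, N 1 0 / M 1 0, ?_⟩
  ext i j
  fin_cases i <;> fin_cases j <;>
    simp only [Fin.zero_eta, Fin.mk_one, Fin.isValue, Matrix.add_apply, Matrix.smul_apply,
      one_apply_eq, ne_eq, zero_ne_one, one_ne_zero, not_false_eq_true, one_apply_ne,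
      smul_eq_mul, mul_one, mul_zero, zero_add, sub_add_cancel] <;> field_simp
  · linear_combination e00
  · linear_combination e10

theorem Matrix.det_smul_one_add_smul_fin_two {R : Type*} [CommRing R]
    (x y : R) (M : Matrix (Fin 2) (Fin 2) R) :
    (x • 1 + y • M).det = x ^ 2 + x * y * M.trace + y ^ 2 * M.det := by
  simp only [det_fin_two, trace_fin_two, Matrix.add_apply, Matrix.smul_apply, one_apply_eq,
    ne_eq, zero_ne_one, one_ne_zero, not_false_eq_true, one_apply_ne, smul_eq_mul, mul_one,
    mul_zero, zero_add]
  ring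

section Valuation

variable {k : Type*} [Field k]

lemma lv_mul (x y : LaurentSeries k) : lv (x * y) = lv x + lv y :=
  HahnSeries.orderTop_mul x y

lemma lv_neg (x : LaurentSeries k) : lv (-x) = lv x :=
  HahnSeries.orderTop_neg

lemma lv_eps : lv (eps k) = 1 :=
  HahnSeries.orderTop_single one_ne_zero

lemma lv_eq_top_iff {x : LaurentSeries k} : lv x = ⊤ ↔ x = 0 :=
  HahnSeries.orderTop_eq_top

lemma ne_zero_of_lv_eq {x : LaurentSeries k} {n : ℤ} (h : lv x = n) : x ≠ 0 := by
  rw [ne_eq, ← lv_eq_top_iff, h]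
  exact WithTop.coe_ne_top

lemma lv_add_eq_left {x y : LaurentSeries k} (h : lv x < lv y) : lv (x + y) = lv x :=
  HahnSeries.orderTop_add_eq_left h

lemma le_lv_add {x y : LaurentSeries k} {n : WithTop ℤ} (hx : n ≤ lv x) (hy : n ≤ lv y) :
    n ≤ lv (x + y) :=
  (le_min hx hy).trans HahnSeries.min_orderTop_le_orderTop_add

lemma lt_lv_mul_eps_mul {y u : LaurentSeries k} {m : ℤ} (hy : m ≤ lv y) (hu : 0 ≤ lv u) :
    m < lv (y * (eps k * u)) := by
  rw [lv_mul, lv_mul, lv_eps]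
  calc (m : WithTop ℤ) < m + 1 := by exact_mod_cast lt_add_one m
    _ ≤ lv y + (1 + lv u) := add_le_add hy (le_add_of_nonneg_right hu)

lemma lv_quadratic_of_lt {x y t δ : LaurentSeries k} {n : ℤ} (hy : lv y = n) (hyx : n < lv x)
    (ht : 1 ≤ lv t) (hδ : lv δ = 1) :
    lv (x ^ 2 + x * y * t + y ^ 2 * δ) = ((2 * n + 1 : ℤ) : WithTop ℤ) := by
  have hx : ((n + 1 : ℤ) : WithTop ℤ) ≤ lv x := by
    cases hlx : lv x with
    | top => exact le_top
    | coe m => rw [hlx] at hyx; exact_mod_cast (WithTop.coe_lt_coe.mp hyx : n < m)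
  have hlead : lv (y ^ 2 * δ) = ((2 * n + 1 : ℤ) : WithTop ℤ) := by
    rw [lv_mul, pow_two, lv_mul, hy, hδ]
    norm_cast
    ring
  have hrest : ((2 * n + 2 : ℤ) : WithTop ℤ) ≤ lv (x ^ 2 + x * y * t) := by
    apply le_lv_add
    · rw [pow_two, lv_mul]
      calc ((2 * n + 2 : ℤ) : WithTop ℤ) = ((n + 1 : ℤ) : WithTop ℤ) + ((n + 1 : ℤ)) := by
            norm_cast; ring
        _ ≤ lv x + lv x := add_le_add hx hx
    · rw [lv_mul, lv_mul, hy]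
      calc ((2 * n + 2 : ℤ) : WithTop ℤ) = ((n + 1 : ℤ) : WithTop ℤ) + n + 1 := by
            norm_cast; ring
        _ ≤ lv x + n + lv t := add_le_add (add_le_add hx le_rfl) ht
  have hlt : lv (y ^ 2 * δ) < lv (x ^ 2 + x * y * t) :=
    hlead ▸ lt_of_lt_of_le (by exact_mod_cast (by omega : 2 * n + 1 < 2 * n + 2)) hrest
  rw [add_comm, lv_add_eq_left hlt, hlead]

end Valuation

section Iwahori

variable {k : Type*} [Field k]

def gTilde (a b c d : LaurentSeries k) : Matrix (Fin 2) (Fin 2) (LaurentSeries k) :=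
  !![eps k * c, d; eps k * a, eps k * b]

lemma one_le_lv_eps_mul {u : LaurentSeries k} (hu : 0 ≤ lv u) : 1 ≤ lv (eps k * u) := by
  rw [lv_mul, lv_eps]
  exact le_add_of_nonneg_right hu

lemma one_le_lv_trace_gTilde {a b c d : LaurentSeries k} (hb : 0 ≤ lv b) (hc : 0 ≤ lv c) :
    1 ≤ lv (gTilde a b c d).trace := by
  rw [trace_fin_two]
  exact le_lv_add (one_le_lv_eps_mul hc) (one_le_lv_eps_mul hb)

lemma lv_det_gTilde {a b c d : LaurentSeries k} (ha : lv a = 0) (hd : lv d = 0)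
    (hb : 0 ≤ lv b) (hc : 0 ≤ lv c) : lv (gTilde a b c d).det = 1 := by
  have hdet : (gTilde a b c d).det = eps k * (-(a * d) + eps k * (c * b)) := by
    simp only [gTilde, det_fin_two, of_apply, cons_val', cons_val_zero, cons_val_one,
      cons_val_fin_one]
    ring
  have hunit : lv (-(a * d)) = 0 := by rw [lv_neg, lv_mul, ha, hd, add_zero]
  have hsmall : lv (-(a * d)) < lv (eps k * (c * b)) :=
    hunit ▸ zero_lt_one.trans_le (one_le_lv_eps_mul (by rw [lv_mul]; exact add_nonneg hc hb))
  rw [hdet, lv_mul, lv_eps, lv_add_eq_left hsmall, hunit, add_zero]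

lemma smul_one_add_smul_gTilde_mem_I1 {a b c d x y : LaurentSeries k} {m : ℤ}
    (ha : 0 ≤ lv a) (hb : 0 ≤ lv b) (hc : 0 ≤ lv c) (hd : 0 ≤ lv d)
    (hx : lv x = m) (hy : m ≤ lv y) : x • 1 + y • gTilde a b c d ∈ I1 k := by
  refine ⟨m, ?_, ?_, ?_, ?_⟩ <;> simp only [gTilde, smul_of, smul_cons,
    smul_eq_mul, smul_empty, Matrix.add_apply, Matrix.smul_apply, one_apply_eq, ne_eq,
    zero_ne_one, one_ne_zero, not_false_eq_true, one_apply_ne, mul_one, mul_zero, zero_add,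
    of_apply, cons_val', cons_val_zero, cons_val_one, cons_val_fin_one]
  · rw [lv_add_eq_left (hx ▸ lt_lv_mul_eps_mul hy hc), hx]
  · rw [lv_add_eq_left (hx ▸ lt_lv_mul_eps_mul hy hb), hx]
  · rw [lv_mul]
    exact hy.trans (le_add_of_nonneg_right hd)
  · exact lt_lv_mul_eps_mul hy ha

end Iwahori

theorem statement2_general (k : Type*) [Field k]
    (a b c d : LaurentSeries k)
    (ha : lv a = 0) (hd : lv d = 0) (hb : 0 ≤ lv b) (hc : 0 ≤ lv c)
    (h : GL (Fin 2) (LaurentSeries k))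
    (hcomm : h.val * !![eps k * c, d; eps k * a, eps k * b]
      = !![eps k * c, d; eps k * a, eps k * b] * h.val)
    (heven : ∃ m : ℤ, lv h.val.det = ((2 * m : ℤ) : WithTop ℤ)) :
    h.val ∈ I1 k := by
  have hg : gTilde a b c d 1 0 ≠ 0 := show eps k * a ≠ 0 from
    mul_ne_zero (ne_zero_of_lv_eq (lv_eps (k := k))) (ne_zero_of_lv_eq ha)
  obtain ⟨x, y, hxy⟩ := exists_eq_smul_one_add_smul_of_commute hg hcomm
  have hdet : h.val.det ≠ 0 := ((isUnit_iff_isUnit_det _).mp h.isUnit).ne_zero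
  rw [hxy, det_smul_one_add_smul_fin_two] at hdet heven
  rw [hxy]
  rcases le_or_gt (lv x) (lv y) with hle | hlt
  · have hx : x ≠ 0 := by
      rintro rfl
      rw [lv_eq_top_iff.mpr rfl, top_le_iff, lv_eq_top_iff] at hle
      subst hle
      simp at hdet
    obtain ⟨m, hm⟩ := WithTop.ne_top_iff_exists.mp (lv_eq_top_iff.not.mpr hx)
    exact smul_one_add_smul_gTilde_mem_I1 ha.ge hb hc hd.ge hm.symm (hm ▸ hle)
  · obtain ⟨n, hn⟩ := WithTop.ne_top_iff_exists.mp (hlt.trans_le le_top).ne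
    obtain ⟨m, hm⟩ := heven
    rw [lv_quadratic_of_lt hn.symm (hn ▸ hlt) (one_le_lv_trace_gTilde hb hc)
      (lv_det_gTilde ha hd hb hc)] at hm
    have : 2 * n + 1 = 2 * m := by exact_mod_cast hm
    omega

theorem statement2 (k : Type*) [Field k] [IsAlgClosed k]
    (a b c d : LaurentSeries k)
    (ha : lv a = 0) (hd : lv d = 0) (hb : 0 ≤ lv b) (hc : 0 ≤ lv c)
    (h : GL (Fin 2) (LaurentSeries k))
    (hcomm : h.val * !![eps k * c, d; eps k * a, eps k * b]
      = !![eps k * c, d; eps k * a, eps k * b] * h.val)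
    (heven : ∃ m : ℤ, lv h.val.det = ((2 * m : ℤ) : WithTop ℤ)) :
    h.val ∈ I1 k :=
  statement2_general k a b c d ha hd hb hc h hcomm heven
end
end

section
/- Let g̃ = [[εc, d],[εa, εb]] and g̃' = [[εc', d'],[εa', εb']] with a, d, a', d' ∈ O* and b, c, b', c' ∈ O, and suppose that b + c = b' + c' and ad − εbc = a'd' − εb'c' (equivalently, g̃ and g̃' have the same trace and the same determinant). Then the matrix r = [[1, (c'−c)/a],[0, a'/a]] lies in I¹ and satisfies r·g̃ = g̃'·r. -/
noncomputable section

/-! The matrix `r` is upper triangular with diagonal entries `1` and `a' / a`, both units, and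
upper-right entry `(c' - c) / a ∈ O`, so it lies in `I¹` with `m = 0`. The identity `r g̃ = g̃' r` is
checked entry by entry: after clearing the denominator `a`, the entries reduce to the equalities of
traces and determinants. -/

section Valuation

variable {k : Type*} [Field k]

theorem lv_eq_addVal (x : LaurentSeries k) : lv x = HahnSeries.addVal ℤ k x :=
  HahnSeries.addVal_apply.symm

theorem lv_zero : lv (0 : LaurentSeries k) = ⊤ :=
  HahnSeries.orderTop_zero

theorem lv_one : lv (1 : LaurentSeries k) = 0 :=
  HahnSeries.orderTop_one

theorem lv_div (x y : LaurentSeries k) : lv (x / y) = lv x - lv y := by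
  simp only [lv_eq_addVal, AddValuation.map_div]

theorem le_lv_sub {g : WithTop ℤ} {x y : LaurentSeries k} (hx : g ≤ lv x) (hy : g ≤ lv y) :
    g ≤ lv (x - y) := by
  rw [lv_eq_addVal] at *
  exact AddValuation.map_le_sub _ hx hy

theorem ne_zero_of_lv_eq_zero {x : LaurentSeries k} (hx : lv x = 0) : x ≠ 0 := by
  rintro rfl
  simp [lv_zero] at hx

end Valuation

theorem upperTriangular_mem_I1 {k : Type*} [Field k] {x y : LaurentSeries k}
    (hx : 0 ≤ lv x) (hy : lv y = 0) : !![1, x; 0, y] ∈ I1 k :=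
  ⟨0, by simpa using lv_one, by simpa using hy, by simpa using hx, by simp [lv_zero]⟩

theorem intertwiner_mul_eq_mul {F : Type*} [Field F] {ε a b c d a' b' c' d' : F} (ha : a ≠ 0)
    (htr : b + c = b' + c') (hdet : a * d - ε * (b * c) = a' * d' - ε * (b' * c')) :
    !![1, (c' - c) / a; 0, a' / a] * !![ε * c, d; ε * a, ε * b]
      = !![ε * c', d'; ε * a', ε * b'] * !![1, (c' - c) / a; 0, a' / a] := by
  ext i j
  fin_cases i <;> fin_cases j <;>
    simp only [Matrix.mul_apply, Fin.sum_univ_two, Matrix.of_apply, Matrix.cons_val',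
      Matrix.cons_val_fin_one, Matrix.cons_val_zero, Matrix.cons_val_one, Fin.zero_eta, Fin.mk_one,
      Fin.isValue, zero_mul, one_mul, mul_zero, mul_one, zero_add, add_zero] <;>
    field_simp
  · ring
  · linear_combination hdet + ε * c' * htr
  · linear_combination ε * a' * htr

theorem statement3_general (k : Type*) [Field k]
    (a b c d a' b' c' d' : LaurentSeries k)
    (ha : lv a = 0) (hc : 0 ≤ lv c)
    (ha' : lv a' = 0) (hc' : 0 ≤ lv c')
    (htr : b + c = b' + c')
    (hdet : a * d - eps k * (b * c) = a' * d' - eps k * (b' * c')) :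
    !![1, (c' - c) / a; 0, a' / a] ∈ I1 k ∧
    !![1, (c' - c) / a; 0, a' / a] * !![eps k * c, d; eps k * a, eps k * b]
      = !![eps k * c', d'; eps k * a', eps k * b'] * !![1, (c' - c) / a; 0, a' / a] := by
  refine ⟨upperTriangular_mem_I1 ?_ ?_, intertwiner_mul_eq_mul (ne_zero_of_lv_eq_zero ha) htr hdet⟩
  · simpa [lv_div, ha] using le_lv_sub hc' hc
  · simp [lv_div, ha, ha']

theorem statement3 (k : Type*) [Field k] [IsAlgClosed k]
    (a b c d a' b' c' d' : LaurentSeries k)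
    (ha : lv a = 0) (hd : lv d = 0) (hb : 0 ≤ lv b) (hc : 0 ≤ lv c)
    (ha' : lv a' = 0) (hd' : lv d' = 0) (hb' : 0 ≤ lv b') (hc' : 0 ≤ lv c')
    (htr : b + c = b' + c')
    (hdet : a * d - eps k * (b * c) = a' * d' - eps k * (b' * c')) :
    !![1, (c' - c) / a; 0, a' / a] ∈ I1 k ∧
    !![1, (c' - c) / a; 0, a' / a] * !![eps k * c, d; eps k * a, eps k * b]
      = !![eps k * c', d'; eps k * a', eps k * b'] * !![1, (c' - c) / a; 0, a' / a] :=
  statement3_general k a b c d a' b' c' d' ha hc ha' hc' htr hdet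
end
end

section
/- Let Ê be the two-dimensional ℂ-vector space with basis {x, x'}, made into a representation of the infinite dihedral group W' by s₁(x) = −x, s₂(x) = −x, s₁(x') = x' + x, s₂(x') = x' (these assignments indeed satisfy s₁² = s₂² = 1). Then the set of sequences (x_n)_{n∈ℤ} of elements of Ê satisfying, for i ∈ {1,2}, s_i(x_n) = −x_n whenever n ≡ i (mod 2) and s_i(x_n) = x_n + x_{n−1} + x_{n+1} whenever n ≡ i+1 (mod 2), is a ℂ-vector space of dimension exactly 2; moreover every such sequence satisfies x_n ∈ ℂ·x for all n ∈ ℤ, and, writing x_n = u_n·x, the scalars satisfy −u_n = u_n + u_{n−1} + u_{n+1} for all n and the sequence is uniquely determined by u₀ and u₁. -/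
/-!
The `-1`-eigenspaces of `s₁` and `s₂` on `Ê` are both the line `ℂ x`, and each `x_n` lies in one
of them; on that line both generators act by `-1`, so the remaining condition becomes
`-x_n = x_n + x_{n-1} + x_{n+1}`. Writing `x_n = u_n x`, this is the recurrence
`u_{n-1} + 2 u_n + u_{n+1} = 0`, which runs in both directions from `(u₀, u₁)`; its solutions
`(-1)^n (c + d n)` realise every initial pair, so `(u₀, u₁)` identifies the solution space with `ℂ²`.
-/

noncomputable section

/-- The two-dimensional vector space `Ê` with basis `{x, x'}`. -/
abbrev Ehat : Type := ℂ × ℂ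

/-- The basis vector `x` of `Ê`. -/
def xv : Ehat := (1, 0)

/-- The basis vector `x'` of `Ê`. -/
def xv' : Ehat := (0, 1)

/-- The action of `s₁` on `Ê`: `s₁ x = -x`, `s₁ x' = x' + x`. -/
def T1 : Ehat →ₗ[ℂ] Ehat :=
  LinearMap.prod (-(LinearMap.fst ℂ ℂ ℂ) + LinearMap.snd ℂ ℂ ℂ) (LinearMap.snd ℂ ℂ ℂ)

/-- The action of `s₂` on `Ê`: `s₂ x = -x`, `s₂ x' = x'`. -/
def T2 : Ehat →ₗ[ℂ] Ehat :=
  LinearMap.prod (-(LinearMap.fst ℂ ℂ ℂ)) (LinearMap.snd ℂ ℂ ℂ)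

/-- The set of sequences `(x_n)_{n ∈ ℤ}` in `Ê` with `s_i x_n = -x_n` for `n ≡ i (mod 2)`
and `s_i x_n = x_n + x_{n-1} + x_{n+1}` for `n ≡ i+1 (mod 2)`, `i ∈ {1, 2}`. -/
def SeqSet : Set (ℤ → Ehat) :=
  {f | ∀ n : ℤ,
    (if n % 2 = 1 then T1 (f n) = -f n else T1 (f n) = f n + f (n - 1) + f (n + 1)) ∧
    (if n % 2 = 0 then T2 (f n) = -f n else T2 (f n) = f n + f (n - 1) + f (n + 1))}

@[simp] lemma T1_apply (v : Ehat) : T1 v = (-v.1 + v.2, v.2) := rfl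

@[simp] lemma T2_apply (v : Ehat) : T2 v = (-v.1, v.2) := rfl

lemma T1_eq_neg_iff (v : Ehat) : T1 v = -v ↔ v.2 = 0 := by
  simp +contextual [Prod.ext_iff]

lemma T2_eq_neg_iff (v : Ehat) : T2 v = -v ↔ v.2 = 0 := by
  simp [Prod.ext_iff, self_eq_neg]

def IsRecSeq {M : Type*} [AddCommGroup M] (a : ℤ → M) : Prop :=
  ∀ n : ℤ, -a n = a n + a (n - 1) + a (n + 1)

namespace IsRecSeq

variable {M N : Type*} [AddCommGroup M] [AddCommGroup N] {a b : ℤ → M}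

lemma map (ha : IsRecSeq a) (φ : M →+ N) : IsRecSeq (fun n => φ (a n)) := fun n => by
  simp only [← map_neg, ← map_add, ha n]

lemma add (ha : IsRecSeq a) (hb : IsRecSeq b) : IsRecSeq (a + b) := fun n => by
  simp only [Pi.add_apply, neg_add, ha n, hb n]; abel

lemma const_smul {R : Type*} [DistribSMul R M] (ha : IsRecSeq a) (c : R) : IsRecSeq (c • a) :=
  ha.map (DistribSMul.toAddMonoidHom M c)

lemma succ_eq (ha : IsRecSeq a) (n : ℤ) : a (n + 1) = -a n - a n - a (n - 1) := by
  rw [eq_sub_iff_add_eq, eq_sub_iff_add_eq, ha n]; abel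

lemma pred_eq (ha : IsRecSeq a) (n : ℤ) : a (n - 1) = -a n - a n - a (n + 1) := by
  rw [eq_sub_iff_add_eq, eq_sub_iff_add_eq, ha n]; abel

lemma ext (ha : IsRecSeq a) (hb : IsRecSeq b) (h0 : a 0 = b 0) (h1 : a 1 = b 1) : a = b := by
  suffices h : ∀ n : ℤ, a n = b n ∧ a (n + 1) = b (n + 1) from funext fun n => (h n).1
  intro n
  induction n using Int.induction_on with
  | zero => exact ⟨h0, h1⟩
  | succ n ih =>
    refine ⟨ih.2, ?_⟩
    rw [ha.succ_eq, hb.succ_eq, add_sub_cancel_right, ih.1, ih.2]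
  | pred n ih =>
    refine ⟨?_, by rw [sub_add_cancel]; exact ih.1⟩
    rw [ha.pred_eq, hb.pred_eq, ih.1, ih.2]

end IsRecSeq

/-- The characteristic polynomial of the recurrence is `(X + 1)²`. -/
lemma isRecSeq_neg_one_zpow_mul {K : Type*} [Field K] (c d : K) :
    IsRecSeq fun n : ℤ => (-1 : K) ^ n * (c + d * n) := fun n => by
  dsimp only
  rw [zpow_add_one₀ (by norm_num), zpow_sub_one₀ (by norm_num)]
  push_cast
  ring

lemma mem_seqSet_iff (f : ℤ → Ehat) : f ∈ SeqSet ↔ (∀ n, (f n).2 = 0) ∧ IsRecSeq f := by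
  constructor
  · intro h
    have hsnd : ∀ n, (f n).2 = 0 := fun n => by
      rcases Int.emod_two_eq n with h0 | h1
      · exact (T2_eq_neg_iff _).1 (by simpa [h0] using (h n).2)
      · exact (T1_eq_neg_iff _).1 (by simpa [h1] using (h n).1)
    refine ⟨hsnd, fun n => ?_⟩
    rcases Int.emod_two_eq n with h0 | h1
    · simpa [h0, (T1_eq_neg_iff _).2 (hsnd n)] using (h n).1
    · simpa [h1, (T2_eq_neg_iff _).2 (hsnd n)] using (h n).2
  · rintro ⟨hsnd, hrec⟩ n
    rw [(T1_eq_neg_iff _).2 (hsnd n), (T2_eq_neg_iff _).2 (hsnd n)]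
    constructor <;> split_ifs <;> first | rfl | exact hrec n

lemma eq_fst_smul_xv {f : ℤ → Ehat} (hf : f ∈ SeqSet) (n : ℤ) : f n = (f n).1 • xv :=
  Prod.ext (by simp [xv]) (by simp [xv, ((mem_seqSet_iff f).1 hf).1 n])

lemma isRecSeq_fst {f : ℤ → Ehat} (hf : f ∈ SeqSet) : IsRecSeq fun n => (f n).1 :=
  ((mem_seqSet_iff f).1 hf).2.map (AddMonoidHom.fst ℂ ℂ)

lemma smul_xv_mem_seqSet {u : ℤ → ℂ} (hu : IsRecSeq u) : (fun n => u n • xv) ∈ SeqSet :=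
  (mem_seqSet_iff _).2
    ⟨fun n => by simp [xv], hu.map (LinearMap.toSpanSingleton ℂ Ehat xv).toAddMonoidHom⟩

lemma eq_of_fst_eq {f g : ℤ → Ehat} (hf : f ∈ SeqSet) (hg : g ∈ SeqSet)
    (h0 : (f 0).1 = (g 0).1) (h1 : (f 1).1 = (g 1).1) : f = g :=
  ((mem_seqSet_iff f).1 hf).2.ext ((mem_seqSet_iff g).1 hg).2
    (by rw [eq_fst_smul_xv hf, eq_fst_smul_xv hg, h0])
    (by rw [eq_fst_smul_xv hf, eq_fst_smul_xv hg, h1])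

def seqSubmodule : Submodule ℂ (ℤ → Ehat) where
  carrier := SeqSet
  zero_mem' := (mem_seqSet_iff 0).2 ⟨fun _ => rfl, fun _ => by simp⟩
  add_mem' {f g} hf hg := by
    rw [mem_seqSet_iff] at hf hg ⊢
    exact ⟨fun n => by simp [hf.1 n, hg.1 n], hf.2.add hg.2⟩
  smul_mem' c f hf := by
    rw [mem_seqSet_iff] at hf ⊢
    exact ⟨fun n => by simp [hf.1 n], hf.2.const_smul c⟩

def evalZeroOne : seqSubmodule →ₗ[ℂ] ℂ × ℂ where
  toFun f := ((f.1 0).1, (f.1 1).1)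
  map_add' _ _ := rfl
  map_smul' _ _ := rfl

lemma evalZeroOne_bijective : Function.Bijective evalZeroOne := by
  constructor
  · rintro ⟨f, hf⟩ ⟨g, hg⟩ h
    obtain ⟨h0, h1⟩ := Prod.mk.inj h
    exact Subtype.ext (eq_of_fst_eq hf hg h0 h1)
  · rintro ⟨c, d⟩
    have hu := isRecSeq_neg_one_zpow_mul c (-(c + d))
    exact ⟨⟨_, smul_xv_mem_seqSet hu⟩,
      Prod.ext (by simp [evalZeroOne, xv]) (by simp [evalZeroOne, xv])⟩

lemma finrank_seqSubmodule : Module.finrank ℂ seqSubmodule = 2 := by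
  rw [(LinearEquiv.ofBijective _ evalZeroOne_bijective).finrank_eq, Module.finrank_prod,
    Module.finrank_self]

theorem statement15 :
    (T1 xv = -xv ∧ T2 xv = -xv ∧ T1 xv' = xv' + xv ∧ T2 xv' = xv') ∧
    T1 ∘ₗ T1 = LinearMap.id ∧ T2 ∘ₗ T2 = LinearMap.id ∧
    (∃ Q : Submodule ℂ (ℤ → Ehat), (Q : Set (ℤ → Ehat)) = SeqSet ∧
      Module.finrank ℂ Q = 2) ∧
    (∀ f ∈ SeqSet, ∀ n : ℤ, ∃ u : ℂ, f n = u • xv) ∧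
    (∀ f ∈ SeqSet, ∀ u : ℤ → ℂ, (∀ n : ℤ, f n = u n • xv) →
      ∀ n : ℤ, -u n = u n + u (n - 1) + u (n + 1)) ∧
    (∀ f ∈ SeqSet, ∀ g ∈ SeqSet, f 0 = g 0 → f 1 = g 1 → f = g) := by
  refine ⟨by simp [xv, xv'], LinearMap.ext fun v => by simp,
    LinearMap.ext fun v => by simp, ⟨seqSubmodule, rfl, finrank_seqSubmodule⟩,
    fun f hf n => ⟨_, eq_fst_smul_xv hf n⟩, fun f hf u hu => ?_,
    fun f hf g hg => ((mem_seqSet_iff f).1 hf).2.ext ((mem_seqSet_iff g).1 hg).2⟩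
  have hfst : (fun n => (f n).1) = u := funext fun n => by simp [hu n, xv]
  exact hfst ▸ isRecSeq_fst hf
end
end
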